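/- Let n and t be integers with 3t ≥ 2(n − 1) and t ≤ n − 3, and let k₊ ≥ 2 be an integer. Then there is no lattice Λ ⊆ ℤⁿ (additive subgroup of ℤⁿ) such that the error-ball B(n,t,k₊,0) tiles ℤⁿ by Λ. -/

import Mathlib

open Finset

/-- Hamming weight of an integer vector: the number of nonzero entries. -/
def wt {n : ℕ} (x : Fin n → ℤ) : ℕ := (Finset.univ.filter (fun i => x i ≠ 0)).card

/-- The `(n,t,k₊,k₋)`-error-ball in `ℤⁿ`. -/
def errBall (n t : ℕ) (kp km : ℤ) : Set (Fin n → ℤ) :=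
  {x | (∀ i, -km ≤ x i ∧ x i ≤ kp) ∧ wt x ≤ t}

/-- `Tiles B T` : every `z ∈ ℤⁿ` is uniquely `z = v + b` with `v ∈ T` and `b ∈ B`. -/
def Tiles {n : ℕ} (B T : Set (Fin n → ℤ)) : Prop :=
  ∀ z : Fin n → ℤ, ∃! p : (Fin n → ℤ) × (Fin n → ℤ),
    p.1 ∈ T ∧ p.2 ∈ B ∧ z = p.1 + p.2


/-!
Let `r z ∈ B = B(n,t,k₊,0)` be the representative of `z` modulo `Λ`. For a `(t+1)`-set `S`,
`r 1_S` vanishes on `S`, and its value `γ l` at `l ∉ S` does not depend on `S`: for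
`C ⊆ S ∩ S'` of size `2t+2-n`, the vector `r 1_S + r 1_{C ∪ Sᶜ}` still lies in `B` (this is where
`3t ≥ 2(n-1)` enters) and represents `1 + 1_C`, whatever `S` is. Hence `1_S - γ 1_{Sᶜ} ∈ Λ` for
every `(t+1)`-set `S`. Exchanging one element of `S` gives `(1+γ i) e_i ≡ (1+γ j) e_j`, so `γ = k₊`
off one coordinate, hence off a set `C` of size `2t+2-n`. Splitting `Cᶜ` into halves `P`, `Q` and
adding the vectors for `Pᶜ` and `Qᶜ` gives `2·1_C ≡ (k₊-1)·1_{Cᶜ}`, two distinct points of `B`.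
-/

variable {n : ℕ}

def ind (S : Finset (Fin n)) : Fin n → ℤ := fun i => if i ∈ S then 1 else 0

theorem wt_ind (S : Finset (Fin n)) : wt (ind S) = S.card := by
  unfold wt ind; congr 1; ext i; by_cases h : i ∈ S <;> simp [h]

theorem mem_errBall_of_support_subset {t : ℕ} {kp : ℤ} {x : Fin n → ℤ} {A : Finset (Fin n)}
    (hx : ∀ i, 0 ≤ x i ∧ x i ≤ kp) (hA : ∀ i ∉ A, x i = 0) (hcard : A.card ≤ t) :
    x ∈ errBall n t kp 0 := by
  refine ⟨fun i => by simpa using hx i, le_trans (card_le_card fun i hi => ?_) hcard⟩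
  by_contra hiA
  exact (mem_filter.1 hi).2 (hA i hiA)

theorem single_mem_errBall {t : ℕ} {kp c : ℤ} (i : Fin n) (hc : 0 ≤ c ∧ c ≤ kp) (ht : 1 ≤ t) :
    Pi.single i c ∈ errBall n t kp 0 := by
  refine mem_errBall_of_support_subset (A := {i}) (fun l => ?_) (fun l hl => ?_) (by simpa)
  · rcases eq_or_ne l i with rfl | h
    · simpa using hc
    · simpa [h] using hc.1.trans hc.2
  · simp_all

theorem card_union_compl_of_subset {t : ℕ} {C S : Finset (Fin n)} (hn : n ≤ 2 * t + 2)
    (hC : C.card = 2 * t + 2 - n) (hS : S.card = t + 1) (hCS : C ⊆ S) :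
    (C ∪ Sᶜ).card = t + 1 := by
  have := S.card_le_univ
  rw [card_union_of_disjoint (disjoint_compl_right.mono_left hCS), card_compl] at *
  simp only [Fintype.card_fin] at *
  omega

theorem exists_card_eq_forall_notMem_eq {α β : Type*} [Fintype α] [DecidableEq α]
    [DecidableEq β] {f : α → β} {a : β} (hf : ∀ i j, i ≠ j → f i = a ∨ f j = a) {m : ℕ}
    (hm₁ : 1 ≤ m) (hm : m ≤ Fintype.card α) :
    ∃ C : Finset α, C.card = m ∧ ∀ l ∉ C, f l = a := by
  have hbad : (univ.filter (f · ≠ a)).card ≤ 1 := by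
    refine card_le_one.2 fun i hi j hj => ?_
    by_contra hij
    simp only [mem_filter, mem_univ, true_and] at hi hj
    exact (hf i j hij).elim hi hj
  obtain ⟨C, hsub, hC⟩ := exists_superset_card_eq (hbad.trans hm₁) hm
  refine ⟨C, hC, fun l hl => ?_⟩
  by_contra h
  exact hl (hsub (by simpa using h))

namespace Tiles

variable {B : Set (Fin n → ℤ)} {Λ : AddSubgroup (Fin n → ℤ)}

theorem eq_of_sub_mem (hT : Tiles B Λ) {b₁ b₂ : Fin n → ℤ} (h₁ : b₁ ∈ B) (h₂ : b₂ ∈ B)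
    (h : b₁ - b₂ ∈ Λ) : b₁ = b₂ := by
  obtain ⟨p, -, hp⟩ := hT b₁
  have e₁ := hp (0, b₁) ⟨Λ.zero_mem, h₁, by simp⟩
  have e₂ := hp (b₁ - b₂, b₂) ⟨h, h₂, by simp⟩
  exact sub_eq_zero.1 (congrArg Prod.fst (e₂.trans e₁.symm))

theorem exists_sub_mem (hT : Tiles B Λ) (z : Fin n → ℤ) : ∃ b ∈ B, z - b ∈ Λ := by
  obtain ⟨⟨v, b⟩, ⟨hv, hb, rfl⟩, -⟩ := hT z
  exact ⟨b, hb, by simpa using hv⟩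

noncomputable def rep (hT : Tiles B Λ) (z : Fin n → ℤ) : Fin n → ℤ :=
  (hT.exists_sub_mem z).choose

theorem rep_mem (hT : Tiles B Λ) (z : Fin n → ℤ) : hT.rep z ∈ B :=
  (hT.exists_sub_mem z).choose_spec.1

theorem sub_rep_mem (hT : Tiles B Λ) (z : Fin n → ℤ) : z - hT.rep z ∈ Λ :=
  (hT.exists_sub_mem z).choose_spec.2

theorem rep_eq (hT : Tiles B Λ) {z b : Fin n → ℤ} (hb : b ∈ B) (h : z - b ∈ Λ) :
    hT.rep z = b :=
  hT.eq_of_sub_mem (hT.rep_mem z) hb (by simpa using Λ.sub_mem h (hT.sub_rep_mem z))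

variable {t : ℕ} {kp : ℤ}

theorem rep_bounds (hT : Tiles (errBall n t kp 0) Λ) (z : Fin n → ℤ) (i : Fin n) :
    0 ≤ hT.rep z i ∧ hT.rep z i ≤ kp := by
  simpa using (hT.rep_mem z).1 i

-- If the representative `r` of `1_S` were positive at `i ∈ S`, then `r - e_i` and `1_S - e_i`
-- would be two congruent points of the ball, forcing `r = 1_S`, which has weight `t + 1`.
theorem rep_ind_apply_of_mem (hT : Tiles (errBall n t kp 0) Λ) {S : Finset (Fin n)}
    (hS : S.card = t + 1) {i : Fin n} (hi : i ∈ S) : hT.rep (ind S) i = 0 := by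
  have hr := hT.rep_bounds (ind S)
  have hwt := (hT.rep_mem (ind S)).2
  set r := hT.rep (ind S)
  by_contra hne
  have hpos : 1 ≤ r i := by have := (hr i).1; omega
  have hkp : 1 ≤ kp := hpos.trans (hr i).2
  have h₁ : r - Pi.single i 1 ∈ errBall n t kp 0 := by
    refine mem_errBall_of_support_subset (A := univ.filter (r · ≠ 0)) (fun l => ?_)
      (fun l hl => ?_) hwt
    · rcases eq_or_ne l i with rfl | h
      · simp only [Pi.sub_apply, Pi.single_eq_same]; have := hr l; omega
      · simpa [h] using hr l
    · have hl : r l = 0 := by simpa using hl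
      have h : l ≠ i := by rintro rfl; exact hne hl
      simp [hl, h]
  have h₂ : ind S - Pi.single i 1 ∈ errBall n t kp 0 := by
    refine mem_errBall_of_support_subset (A := S.erase i) (fun l => ?_) (fun l hl => ?_)
      (by rw [card_erase_of_mem hi, hS]; simp)
    · rcases eq_or_ne l i with rfl | h
      · simp [ind, hi]; omega
      · by_cases hl : l ∈ S <;> simp [ind, h, hl] <;> omega
    · rcases eq_or_ne l i with rfl | h
      · simp [ind, hi]
      · simp_all [ind]
  have hrS : r = ind S :=
    sub_left_injective (hT.eq_of_sub_mem h₁ h₂ (by simpa using Λ.neg_mem (hT.sub_rep_mem _)))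
  rw [hrS, wt_ind] at hwt
  omega

-- `r 1_S` is supported in `Sᶜ` and `r 1_{C ∪ Sᶜ}` in `S \ C`, so the sum stays in `[0, k₊]` and
-- has weight at most `n - |C| = 2n - 2t - 2 ≤ t`.
theorem rep_ind_add_rep_ind_union_compl (hT : Tiles (errBall n t kp 0) Λ)
    (hn : 2 * n ≤ 3 * t + 2) {C S : Finset (Fin n)} (hC : C.card = 2 * t + 2 - n)
    (hS : S.card = t + 1) (hCS : C ⊆ S) :
    hT.rep (ind S) + hT.rep (ind (C ∪ Sᶜ)) = hT.rep (1 + ind C) := by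
  have hS' := card_union_compl_of_subset (by omega) hC hS hCS
  have h₀ : ∀ l ∈ S, hT.rep (ind S) l = 0 := fun l hl => hT.rep_ind_apply_of_mem hS hl
  have h₀' : ∀ l ∈ C ∪ Sᶜ, hT.rep (ind (C ∪ Sᶜ)) l = 0 :=
    fun l hl => hT.rep_ind_apply_of_mem hS' hl
  have hsum : 1 + ind C = ind S + ind (C ∪ Sᶜ) := by
    funext l
    by_cases hlC : l ∈ C
    · simp [ind, hlC, hCS hlC]
    · by_cases hlS : l ∈ S <;> simp [ind, hlC, hlS]
  symm
  refine hT.rep_eq (mem_errBall_of_support_subset (A := Sᶜ ∪ (S \ C)) (fun l => ?_)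
    (fun l hl => ?_) ?_) ?_
  · have := hT.rep_bounds (ind S) l
    have := hT.rep_bounds (ind (C ∪ Sᶜ)) l
    by_cases hl : l ∈ S
    · simp only [Pi.add_apply, h₀ l hl]; omega
    · simp only [Pi.add_apply, h₀' l (by simp [hl])]; omega
  · simp only [mem_union, mem_compl, mem_sdiff, not_or, not_and, not_not] at hl
    simp [h₀ l hl.1, h₀' l (mem_union_left _ (hl.2 hl.1))]
  · have := card_union_le Sᶜ (S \ C)
    rw [card_sdiff_of_subset hCS, card_compl, Fintype.card_fin] at this
    omega
  · rw [hsum, add_sub_add_comm]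
    exact Λ.add_mem (hT.sub_rep_mem _) (hT.sub_rep_mem _)

theorem rep_ind_apply_eq_of_notMem (hT : Tiles (errBall n t kp 0) Λ)
    (hn : 2 * n ≤ 3 * t + 2) {S S' : Finset (Fin n)} (hS : S.card = t + 1)
    (hS' : S'.card = t + 1) {l : Fin n} (hl : l ∉ S) (hl' : l ∉ S') :
    hT.rep (ind S) l = hT.rep (ind S') l := by
  have hinter : 2 * t + 2 - n ≤ (S ∩ S').card := by
    have := card_inter_add_card_union S S'
    have := card_le_univ (S ∪ S')
    rw [Fintype.card_fin] at this
    omega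
  obtain ⟨C, hCsub, hC⟩ := exists_subset_card_eq hinter
  have key : ∀ T : Finset (Fin n), T.card = t + 1 → C ⊆ T → l ∉ T →
      hT.rep (ind T) l = hT.rep (1 + ind C) l := by
    intro T hT' hCT hlT
    rw [← hT.rep_ind_add_rep_ind_union_compl hn hC hT' hCT, Pi.add_apply,
      hT.rep_ind_apply_of_mem (card_union_compl_of_subset (by omega) hC hT' hCT)
        (mem_union_right _ (mem_compl.2 hlT)), add_zero]
  rw [key S hS (hCsub.trans inter_subset_left) hl, key S' hS' (hCsub.trans inter_subset_right) hl']

theorem exists_offset (hT : Tiles (errBall n t kp 0) Λ) (hn : 2 * n ≤ 3 * t + 2)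
    (ht : t + 2 ≤ n) :
    ∃ γ : Fin n → ℤ, (∀ l, 0 ≤ γ l ∧ γ l ≤ kp) ∧
      ∀ S : Finset (Fin n), S.card = t + 1 → (fun l => if l ∈ S then 1 else -γ l) ∈ Λ := by
  have hfree : ∀ l : Fin n, ∃ S : Finset (Fin n), S.card = t + 1 ∧ l ∉ S := by
    intro l
    obtain ⟨S, hsub, hS⟩ := exists_subset_card_eq (s := univ.erase l) (n := t + 1)
      (by simp; omega)
    exact ⟨S, hS, fun h => by simpa using hsub h⟩
  choose S₀ hS₀ hlS₀ using hfree
  refine ⟨fun l => hT.rep (ind (S₀ l)) l, fun l => hT.rep_bounds _ l, fun S hS => ?_⟩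
  convert hT.sub_rep_mem (ind S) using 1
  funext l
  by_cases hl : l ∈ S
  · simp [ind, hl, hT.rep_ind_apply_of_mem hS hl]
  · simp [ind, hl, hT.rep_ind_apply_eq_of_notMem hn hS (hS₀ l) hl (hlS₀ l)]

end Tiles

theorem single_sub_single_mem {t : ℕ} {Λ : AddSubgroup (Fin n → ℤ)} {γ : Fin n → ℤ}
    (hv : ∀ S : Finset (Fin n), S.card = t + 1 → (fun l => if l ∈ S then 1 else -γ l) ∈ Λ)
    (ht : t + 2 ≤ n) {i j : Fin n} (hij : i ≠ j) :
    Pi.single i (1 + γ i) - Pi.single j (1 + γ j) ∈ Λ := by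
  obtain ⟨A, hA, hAcard⟩ := exists_subset_card_eq (s := (univ.erase i).erase j) (n := t)
    (by rw [card_erase_of_mem (by simpa using hij.symm), card_erase_of_mem (mem_univ _)]
        simp only [card_univ, Fintype.card_fin]; omega)
  have hiA : i ∉ A := fun h => by simpa using hA h
  have hjA : j ∉ A := fun h => by simpa using hA h
  convert Λ.sub_mem (hv (insert i A) (by rw [card_insert_of_notMem hiA, hAcard]))
    (hv (insert j A) (by rw [card_insert_of_notMem hjA, hAcard])) using 1
  funext l
  rcases eq_or_ne l i with rfl | hli
  · simp [hij, hiA]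
  rcases eq_or_ne l j with rfl | hlj
  · simp [hij.symm, hjA]; ring
  · by_cases hl : l ∈ A <;> simp [hli, hlj, hl]

theorem Tiles.eq_or_eq_of_ne {t : ℕ} {kp : ℤ} {Λ : AddSubgroup (Fin n → ℤ)}
    (hT : Tiles (errBall n t kp 0) Λ) {γ : Fin n → ℤ} (hγ : ∀ l, 0 ≤ γ l ∧ γ l ≤ kp)
    (hv : ∀ S : Finset (Fin n), S.card = t + 1 → (fun l => if l ∈ S then 1 else -γ l) ∈ Λ)
    (ht₁ : 1 ≤ t) (ht : t + 2 ≤ n) {i j : Fin n} (hij : i ≠ j) : γ i = kp ∨ γ j = kp := by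
  by_contra! h
  have hball : ∀ l, γ l ≠ kp → Pi.single l (1 + γ l) ∈ errBall n t kp 0 := fun l hl =>
    single_mem_errBall l (by have := hγ l; omega) ht₁
  have hi := congrFun (hT.eq_of_sub_mem (hball i h.1) (hball j h.2)
    (single_sub_single_mem hv ht hij)) i
  have := hγ i
  simp [hij] at hi
  omega

theorem ite_mem_of_forall_notMem_eq {t m : ℕ} {kp : ℤ} {Λ : AddSubgroup (Fin n → ℤ)}
    {γ : Fin n → ℤ}
    (hv : ∀ S : Finset (Fin n), S.card = t + 1 → (fun l => if l ∈ S then 1 else -γ l) ∈ Λ)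
    (hm : t + 1 + m = n) {C : Finset (Fin n)} (hC : Cᶜ.card = 2 * m)
    (hγC : ∀ l ∉ C, γ l = kp) :
    (fun l => if l ∈ C then 2 else 1 - kp) ∈ Λ := by
  obtain ⟨P, hP, hPcard⟩ := exists_subset_card_eq (s := Cᶜ) (n := m) (by omega)
  have hQcard : (Cᶜ \ P).card = m := by rw [card_sdiff_of_subset hP]; omega
  have hcompl : ∀ D : Finset (Fin n), D.card = m → Dᶜ.card = t + 1 := fun D hD => by
    rw [card_compl, Fintype.card_fin, hD]; omega
  convert Λ.add_mem (hv _ (hcompl P hPcard)) (hv _ (hcompl _ hQcard)) using 1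
  funext l
  by_cases hlC : l ∈ C
  · have hlP : l ∉ P := fun h => by simpa [hlC] using hP h
    simp [hlC, hlP]
  · by_cases hlP : l ∈ P <;> simp [hlC, hlP, hγC l hlC] <;> ring

theorem stmt_12 (n t : ℕ) (kp : ℤ) (ht1 : 2 * n ≤ 3 * t + 2) (ht2 : t + 3 ≤ n)
    (hkp : 2 ≤ kp) :
    ¬ ∃ Λ : AddSubgroup (Fin n → ℤ),
      Tiles (errBall n t kp 0) (Λ : Set (Fin n → ℤ)) := by
  rintro ⟨Λ, hT⟩
  obtain ⟨γ, hγ, hv⟩ := hT.exists_offset ht1 (by omega)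
  obtain ⟨C, hC, hγC⟩ := exists_card_eq_forall_notMem_eq (a := kp) (m := 2 * t + 2 - n)
    (fun i j hij => hT.eq_or_eq_of_ne hγ hv (by omega) (by omega) hij) (by omega) (by simp; omega)
  have hCc : Cᶜ.card = 2 * (n - (t + 1)) := by rw [card_compl, Fintype.card_fin, hC]; omega
  have hb₁ : (fun l => if l ∈ C then 2 else 0) ∈ errBall n t kp 0 :=
    mem_errBall_of_support_subset (A := C) (fun l => by split_ifs <;> omega)
      (fun l hl => if_neg hl) (by omega)
  have hb₂ : (fun l => if l ∈ C then 0 else kp - 1) ∈ errBall n t kp 0 :=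
    mem_errBall_of_support_subset (A := Cᶜ) (fun l => by split_ifs <;> omega)
      (fun l hl => if_pos (by simpa using hl)) (by omega)
  have h := hT.eq_of_sub_mem hb₁ hb₂ (by
    convert ite_mem_of_forall_notMem_eq hv (by omega) hCc hγC using 1
    funext l; simp only [Pi.sub_apply]; split_ifs <;> ring)
  obtain ⟨l, hl⟩ : C.Nonempty := card_pos.1 (by omega)
  simpa [hl] using congrFun h l
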